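/- Let x be a binary sequence of length n ≥ 1 and let x̌ = x‖x̄ be the concatenation of x with its bitwise complement (of length 2n). Then γ_{x̌} = β_x + (1/2)^{n−1}·γ_x + (1/2)^n·α_x + n·(1/2)^n, where the coefficients of x̌ are computed with respect to its length 2n. -/

import Mathlib

open Finset

/-- The coefficient `α_x`. -/
noncomputable def alphaC {n : ℕ} (x : Fin n → Bool) : ℝ :=
  (∑ i ∈ univ.filter (fun i : Fin n => x i = false),
     ∑ j ∈ univ.filter (fun j : Fin n => x j = false ∧ i < j),
       ((1:ℝ)/2) ^ ((j : ℕ) - (i : ℕ)))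
  + ∑ i ∈ univ.filter (fun i : Fin n => x i = true),
      ∑ j ∈ univ.filter (fun j : Fin n => x j = true ∧ i < j),
        ((1:ℝ)/2) ^ ((j : ℕ) - (i : ℕ))

/-- The coefficient `β_x`. -/
noncomputable def betaC {n : ℕ} (x : Fin n → Bool) : ℝ :=
  (∑ i ∈ univ.filter (fun i : Fin n => x i = false),
     ∑ j ∈ univ.filter (fun j : Fin n => x j = false ∧ i < j),
       ((1:ℝ)/2) ^ (n - ((j : ℕ) - (i : ℕ))))
  + ∑ i ∈ univ.filter (fun i : Fin n => x i = true),
      ∑ j ∈ univ.filter (fun j : Fin n => x j = true ∧ i < j),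
        ((1:ℝ)/2) ^ (n - ((j : ℕ) - (i : ℕ)))

/-- The coefficient `γ_x`. -/
noncomputable def gammaC {n : ℕ} (x : Fin n → Bool) : ℝ :=
  (∑ i ∈ univ.filter (fun i : Fin n => x i = false),
     ∑ j ∈ univ.filter (fun j : Fin n => x j = true ∧ i < j),
       ((1:ℝ)/2) ^ (n - ((j : ℕ) - (i : ℕ))))
  + ∑ i ∈ univ.filter (fun i : Fin n => x i = true),
      ∑ j ∈ univ.filter (fun j : Fin n => x j = false ∧ i < j),
        ((1:ℝ)/2) ^ (n - ((j : ℕ) - (i : ℕ)))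

/-- The coefficient `δ_x`. -/
noncomputable def deltaC {n : ℕ} (x : Fin n → Bool) : ℝ :=
  (∑ i ∈ univ.filter (fun i : Fin n => x i = false),
     ∑ j ∈ univ.filter (fun j : Fin n => x j = true ∧ i < j),
       ((1:ℝ)/2) ^ ((j : ℕ) - (i : ℕ)))
  + ∑ i ∈ univ.filter (fun i : Fin n => x i = true),
      ∑ j ∈ univ.filter (fun j : Fin n => x j = false ∧ i < j),
        ((1:ℝ)/2) ^ ((j : ℕ) - (i : ℕ))

/-! Write each coefficient as a sum of weights `w (j - i)` over the pairs `i < j` of equal, or of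
different, letters. The pairs of `x‖x̄` lying inside one half are unequal exactly when the
corresponding pair of `x` is, and each half contributes `(1/2)^n γ_x`. A pair `(i, n + j)` across
the halves is unequal exactly when `x i = x j`; splitting these by `i < j`, `i > j` and `i = j`
gives `β_x`, `(1/2)^n α_x` and `n (1/2)^n`. -/

theorem sum_filter_sum_filter_eq_sum_sum_ite {m : ℕ} (y : Fin m → Bool) (a b : Bool)
    (f : Fin m → Fin m → ℝ) :
    ∑ i ∈ univ.filter (fun i => y i = a), ∑ j ∈ univ.filter (fun j => y j = b ∧ i < j), f i j
      = ∑ i, ∑ j, if (y i = a ∧ y j = b) ∧ i < j then f i j else 0 := by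
  rw [sum_filter]
  refine sum_congr rfl fun i _ => ?_
  by_cases h : y i = a <;> simp [h, sum_filter]

section PairSum

variable {m : ℕ}

noncomputable def pairSum (r : Bool → Bool → Prop) [DecidableRel r] (y : Fin m → Bool)
    (w : ℕ → ℝ) : ℝ :=
  ∑ i, ∑ j, if r (y i) (y j) ∧ i < j then w ((j : ℕ) - i) else 0

variable (r : Bool → Bool → Prop) [DecidableRel r] (y : Fin m → Bool)

theorem pairSum_congr {w w' : ℕ → ℝ} (h : ∀ d < m, w d = w' d) :
    pairSum r y w = pairSum r y w' := by
  refine sum_congr rfl fun i _ => sum_congr rfl fun j _ => ?_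
  have := j.isLt
  split_ifs
  · exact h _ (by omega)
  · rfl

theorem pairSum_const_mul (c : ℝ) (w : ℕ → ℝ) :
    pairSum r y (fun d => c * w d) = c * pairSum r y w := by
  simp only [pairSum, mul_sum, mul_ite, mul_zero]

end PairSum

theorem alphaC_eq_pairSum {m : ℕ} (y : Fin m → Bool) :
    alphaC y = pairSum (· = ·) y (fun d => ((1:ℝ)/2) ^ d) := by
  rw [alphaC, sum_filter_sum_filter_eq_sum_sum_ite, sum_filter_sum_filter_eq_sum_sum_ite,
    ← sum_add_distrib]
  refine sum_congr rfl fun i _ => ?_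
  rw [← sum_add_distrib]
  refine sum_congr rfl fun j _ => ?_
  cases y i <;> cases y j <;> simp

theorem betaC_eq_pairSum {m : ℕ} (y : Fin m → Bool) :
    betaC y = pairSum (· = ·) y (fun d => ((1:ℝ)/2) ^ (m - d)) := by
  rw [betaC, sum_filter_sum_filter_eq_sum_sum_ite, sum_filter_sum_filter_eq_sum_sum_ite,
    ← sum_add_distrib]
  refine sum_congr rfl fun i _ => ?_
  rw [← sum_add_distrib]
  refine sum_congr rfl fun j _ => ?_
  cases y i <;> cases y j <;> simp

theorem gammaC_eq_pairSum {m : ℕ} (y : Fin m → Bool) :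
    gammaC y = pairSum (· ≠ ·) y (fun d => ((1:ℝ)/2) ^ (m - d)) := by
  rw [gammaC, sum_filter_sum_filter_eq_sum_sum_ite, sum_filter_sum_filter_eq_sum_sum_ite,
    ← sum_add_distrib]
  refine sum_congr rfl fun i _ => ?_
  rw [← sum_add_distrib]
  refine sum_congr rfl fun j _ => ?_
  cases y i <;> cases y j <;> simp

theorem pairSum_ne_append_compl {n : ℕ} (x : Fin n → Bool) (w : ℕ → ℝ) :
    pairSum (· ≠ ·) (Fin.append x fun i => !x i) w
      = 2 * pairSum (· ≠ ·) x w + ∑ i, ∑ j, if x i = x j then w (n + j - i) else 0 := by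
  simp only [pairSum, Fin.sum_univ_add, Fin.append_left, Fin.append_right, Fin.lt_def,
    Fin.val_castAdd, Fin.val_natAdd, Bool.ne_not, Bool.not_eq, add_lt_add_iff_left,
    Nat.add_sub_add_left]
  have h_cross : ∀ i j : Fin n, (i : ℕ) < n + j := fun i j => by omega
  have h_back : ∀ i j : Fin n, ¬ n + (i : ℕ) < j := fun i j => by omega
  simp only [h_cross, h_back, and_true, and_false, if_false, sum_const_zero, zero_add,
    sum_add_distrib]
  ring

theorem sum_sum_ite_eq_split_pairSum {n : ℕ} (y : Fin n → Bool) (w : ℕ → ℝ) :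
    ∑ i, ∑ j, (if y i = y j then w (n + j - i) else 0)
      = pairSum (· = ·) y (fun d => w (n + d)) + pairSum (· = ·) y (fun d => w (n - d))
        + n * w n := by
  have h_split : ∀ i j : Fin n, (if y i = y j then w (n + j - i) else 0)
      = (if y i = y j ∧ i < j then w (n + (j - i)) else 0)
        + (if y j = y i ∧ j < i then w (n - (i - j)) else 0) + (if i = j then w n else 0) := by
    intro i j
    have := i.isLt
    by_cases hy : y i = y j
    · rcases lt_trichotomy i j with h | rfl | h
      · simp only [hy, h, h.ne, not_lt_of_gt h, true_and, and_false, if_true, if_false,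
          add_zero]
        congr 1
        omega
      · simp
      · simp only [hy, h, h.ne', not_lt_of_gt h, true_and, and_false, if_true, if_false,
          add_zero, zero_add]
        congr 1
        omega
    · have hij : i ≠ j := by rintro rfl; exact hy rfl
      simp [hy, Ne.symm hy, hij]
  simp only [h_split, sum_add_distrib]
  rw [sum_comm (f := fun i j => if y j = y i ∧ j < i then _ else _)]
  simp [pairSum]

/-- Lemma 3(f): `γ_{x‖x̄} = β_x + (1/2)^{n-1}·γ_x + (1/2)^n·α_x + n·(1/2)^n`. -/
theorem gamma_append_compl (n : ℕ) (hn : 1 ≤ n) (x : Fin n → Bool) :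
    gammaC (Fin.append x (fun i => !(x i))) =
      betaC x + ((1:ℝ)/2) ^ (n - 1) * gammaC x + ((1:ℝ)/2) ^ n * alphaC x
        + (n : ℝ) * ((1:ℝ)/2) ^ n := by
  have h_within : pairSum (· ≠ ·) x (fun d => ((1:ℝ)/2) ^ (n + n - d))
      = ((1:ℝ)/2) ^ n * gammaC x := by
    rw [gammaC_eq_pairSum, ← pairSum_const_mul]
    exact pairSum_congr _ _ fun d hd => by rw [← pow_add]; congr 1; omega
  have h_across_forward :
      pairSum (· = ·) x (fun d => ((1:ℝ)/2) ^ (n + n - (n + d))) = betaC x := by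
    simp only [betaC_eq_pairSum, Nat.add_sub_add_left]
  have h_across_backward : pairSum (· = ·) x (fun d => ((1:ℝ)/2) ^ (n + n - (n - d)))
      = ((1:ℝ)/2) ^ n * alphaC x := by
    rw [alphaC_eq_pairSum, ← pairSum_const_mul]
    exact pairSum_congr _ _ fun d hd => by rw [← pow_add]; congr 1; omega
  have h_half : ((1:ℝ)/2) ^ (n - 1) = 2 * ((1:ℝ)/2) ^ n := by
    rw [pow_sub₀ _ (by norm_num) hn]
    ring
  rw [gammaC_eq_pairSum, pairSum_ne_append_compl,
    sum_sum_ite_eq_split_pairSum x fun d => ((1:ℝ)/2) ^ (n + n - d), h_within,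
    h_across_forward, h_across_backward, h_half, Nat.add_sub_cancel]
  ring
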